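/- arXiv:2101.03041 — 2 statements merged into one kernel-verified Lean document; each statement's English description precedes it below -/
import Mathlib

section
/- For all real numbers a, b and x, ∫_{−∞}^{x} Φ(au + b) · (e^{−u²/2}/√(2π)) du = Φ_{−a/√(a²+1)}(b/√(a²+1), x), where Φ_ρ denotes the bivariate standard normal cumulative distribution function with correlation ρ. -/
open MeasureTheory ProbabilityTheory Set
open scoped ENNReal

/-- Standard normal cumulative distribution function `Φ`. -/
noncomputable def stdNormalCDF (x : ℝ) : ℝ :=
  ((gaussianReal 0 1) (Set.Iic x)).toReal

/-- Generalized inverse `Φ⁻¹` of the standard normal cdf. -/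
noncomputable def stdNormalInv : ℝ → ℝ :=
  Function.invFun stdNormalCDF

/-- Bivariate standard normal cdf `Φ_ρ` with correlation `ρ`. -/
noncomputable def Phi2 (ρ x y : ℝ) : ℝ :=
  ∫ u in Set.Iic x, ∫ v in Set.Iic y,
    (1 / (2 * Real.pi * Real.sqrt (1 - ρ ^ 2))) *
      Real.exp (-(u ^ 2 - 2 * ρ * u * v + v ^ 2) / (2 * (1 - ρ ^ 2)))

/-!
Integrating out the first coordinate of the bivariate density by Fubini gives
`Φ_ρ(x, y) = ∫_{-∞}^{y} Φ((x - ρv)/√(1 - ρ²)) φ(v) dv`, with `φ` the standard normal density,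
since conditionally on `v` the first coordinate is `𝒩(ρv, 1 - ρ²)`. For `ρ = -a/√(a² + 1)` and
`x = b/√(a² + 1)` one has `√(1 - ρ²) = 1/√(a² + 1)`, so the argument of `Φ` is exactly `av + b`.
-/

open Real
open scoped NNReal

lemma gaussianReal_Iic (m : ℝ) {v : ℝ≥0} (hv : v ≠ 0) (B : ℝ) :
    gaussianReal m v (Iic B) = gaussianReal 0 1 (Iic ((B - m) / √v)) := by
  have hσ : 0 < √(v : ℝ) := sqrt_pos.2 (by positivity)
  have hstd : (gaussianReal m v).map (fun t => (t - m) / √v) = gaussianReal 0 1 := by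
    have hcomp : (fun t => (t - m) / √v) = (· / √v) ∘ (· - m) := rfl
    rw [hcomp, ← Measure.map_map (by fun_prop) (by fun_prop), gaussianReal_map_sub_const,
      gaussianReal_map_div_const, sub_self, zero_div]
    congr 1
    ext
    simp [div_self (NNReal.coe_ne_zero.2 hv)]
  have hpre : (fun t => (t - m) / √v) ⁻¹' Iic ((B - m) / √v) = Iic B := by
    ext t
    simp [div_le_div_iff_of_pos_right hσ]
  rw [← hstd, Measure.map_apply (by fun_prop) measurableSet_Iic, hpre]

lemma setIntegral_Iic_gaussianPDFReal (m : ℝ) {v : ℝ≥0} (hv : v ≠ 0) (B : ℝ) :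
    ∫ u in Iic B, gaussianPDFReal m v u = stdNormalCDF ((B - m) / √v) := by
  have hnonneg : 0 ≤ ∫ u in Iic B, gaussianPDFReal m v u :=
    setIntegral_nonneg measurableSet_Iic fun u _ => gaussianPDFReal_nonneg _ _ _
  rw [stdNormalCDF, ← gaussianReal_Iic m hv, gaussianReal_apply_eq_integral m hv,
    ENNReal.toReal_ofReal hnonneg]

noncomputable def bivariateStdNormalPDF (ρ u v : ℝ) : ℝ :=
  1 / (2 * π * √(1 - ρ ^ 2)) * exp (-(u ^ 2 - 2 * ρ * u * v + v ^ 2) / (2 * (1 - ρ ^ 2)))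

lemma Phi2_eq_setIntegral_bivariateStdNormalPDF (ρ x y : ℝ) :
    Phi2 ρ x y = ∫ u in Iic x, ∫ v in Iic y, bivariateStdNormalPDF ρ u v := rfl

section

variable {ρ : ℝ}

lemma bivariateStdNormalPDF_eq_mul (hρ : ρ ^ 2 < 1) (u v : ℝ) :
    bivariateStdNormalPDF ρ u v
      = gaussianPDFReal (ρ * v) (1 - ρ ^ 2).toNNReal u * (exp (-v ^ 2 / 2) / √(2 * π)) := by
  have h1ρ : 0 < 1 - ρ ^ 2 := by linarith
  have hexp : -(u ^ 2 - 2 * ρ * u * v + v ^ 2) / (2 * (1 - ρ ^ 2))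
      = -(u - ρ * v) ^ 2 / (2 * (1 - ρ ^ 2)) + -v ^ 2 / 2 := by
    field_simp
    ring
  have hconst : 1 / (2 * π * √(1 - ρ ^ 2)) = (√(2 * π * (1 - ρ ^ 2)))⁻¹ * (1 / √(2 * π)) := by
    rw [sqrt_mul (by positivity), ← one_div, div_mul_div_comm, one_mul, mul_right_comm (√(2 * π)),
      mul_self_sqrt (by positivity)]
  rw [bivariateStdNormalPDF, gaussianPDFReal, Real.coe_toNNReal _ h1ρ.le, hexp, exp_add, hconst]
  ring

lemma setIntegral_Iic_bivariateStdNormalPDF_left (hρ : ρ ^ 2 < 1) (x v : ℝ) :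
    ∫ u in Iic x, bivariateStdNormalPDF ρ u v
      = stdNormalCDF ((x - ρ * v) / √(1 - ρ ^ 2)) * (exp (-v ^ 2 / 2) / √(2 * π)) := by
  have h1ρ : 0 < 1 - ρ ^ 2 := by linarith
  simp_rw [bivariateStdNormalPDF_eq_mul hρ, integral_mul_const]
  rw [setIntegral_Iic_gaussianPDFReal _ (by simpa using h1ρ), Real.coe_toNNReal _ h1ρ.le]

lemma integrable_bivariateStdNormalPDF (hρ : ρ ^ 2 < 1) :
    Integrable (Function.uncurry (bivariateStdNormalPDF ρ)) (volume.prod volume) := by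
  have h1ρ : 0 < 1 - ρ ^ 2 := by linarith
  have hcont : Continuous (Function.uncurry (bivariateStdNormalPDF ρ)) := by
    unfold bivariateStdNormalPDF
    fun_prop
  have hdom : Integrable (fun z : ℝ × ℝ =>
      1 / (2 * π * √(1 - ρ ^ 2)) * (exp (-(1 / 4) * z.1 ^ 2) * exp (-(1 / 4) * z.2 ^ 2)))
      (volume.prod volume) :=
    ((integrable_exp_neg_mul_sq (by norm_num)).mul_prod
      (integrable_exp_neg_mul_sq (by norm_num))).const_mul _
  refine hdom.mono' hcont.aestronglyMeasurable (.of_forall fun ⟨u, v⟩ => ?_)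
  rw [Function.uncurry_apply_pair, bivariateStdNormalPDF, norm_of_nonneg (by positivity),
    ← exp_add]
  gcongr
  rw [div_le_iff₀ (by positivity)]
  -- `2 (u² - 2ρuv + v²) - (1 - ρ²)(u² + v²) = (u - ρv)² + (v - ρu)²`
  nlinarith [sq_nonneg (u - ρ * v), sq_nonneg (v - ρ * u)]

lemma Phi2_eq_setIntegral_stdNormalCDF (hρ : ρ ^ 2 < 1) (x y : ℝ) :
    Phi2 ρ x y = ∫ v in Iic y,
      stdNormalCDF ((x - ρ * v) / √(1 - ρ ^ 2)) * (exp (-v ^ 2 / 2) / √(2 * π)) := by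
  have hint : Integrable (Function.uncurry (bivariateStdNormalPDF ρ))
      ((volume.restrict (Iic x)).prod (volume.restrict (Iic y))) := by
    rw [Measure.prod_restrict]
    exact (integrable_bivariateStdNormalPDF hρ).restrict
  rw [Phi2_eq_setIntegral_bivariateStdNormalPDF, integral_integral_swap hint]
  exact setIntegral_congr_fun measurableSet_Iic fun v _ =>
    setIntegral_Iic_bivariateStdNormalPDF_left hρ x v

end

/-- Lemma 3 (i): `∫_{−∞}^{x} Φ(au + b) e^{−u²/2}/√(2π) du
= Φ_{−a/√(a²+1)}(b/√(a²+1), x)`. -/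
theorem integral_cdf_gaussian (a b x : ℝ) :
    (∫ u in Set.Iic x,
        stdNormalCDF (a * u + b) * (Real.exp (-u ^ 2 / 2) / Real.sqrt (2 * Real.pi)))
      = Phi2 (-a / Real.sqrt (a ^ 2 + 1)) (b / Real.sqrt (a ^ 2 + 1)) x := by
  have hs2 : √(a ^ 2 + 1) ^ 2 = a ^ 2 + 1 := sq_sqrt (by positivity)
  have h1ρ : 1 - (-a / √(a ^ 2 + 1)) ^ 2 = (1 / √(a ^ 2 + 1)) ^ 2 := by
    field_simp
    linarith
  have hρ : (-a / √(a ^ 2 + 1)) ^ 2 < 1 := by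
    have : 0 < (1 / √(a ^ 2 + 1)) ^ 2 := by positivity
    linarith
  rw [Phi2_eq_setIntegral_stdNormalCDF hρ, h1ρ, sqrt_sq (by positivity)]
  refine setIntegral_congr_fun measurableSet_Iic fun u _ => ?_
  congr 2
  field_simp
  ring
end

section
/- For all real numbers x, y and every ρ ∈ (0,1), Φ_{√(1−ρ²)}(x,y) = Φ(y)·Φ((x − √(1−ρ²)·y)/ρ) + Φ(x) − Φ_ρ(x, (x − √(1−ρ²)·y)/ρ). -/
/-!
Conditioning on the first coordinate, `Φ_r(x, y) = 𝔼[Φ((y - r U) / √(1 - r²)); U ≤ x]` for a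
standard normal `U`. Put `s = √(1 - ρ²)` and `z = (x - s y) / ρ`. Then
`Φ_s(x, y) + Φ_ρ(x, z) - Φ(x)` is the probability that an independent standard normal pair `(U, T)`
satisfies `ρ U - s T < z` and `s U + ρ T ≤ y`; these two conditions already force `U ≤ x`, because
`U = ρ (ρ U - s T) + s (s U + ρ T)`. The standard Gaussian measure on `ℝ²` is invariant under the
rotation `(U, T) ↦ (ρ U - s T, s U + ρ T)`, so that probability is `Φ(z) Φ(y)`.
-/

open MeasureTheory ProbabilityTheory Set
open scoped ENNReal

open scoped NNReal

theorem stdNormalCDF_eq_measureReal (x : ℝ) :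
    stdNormalCDF x = (gaussianReal 0 1).real (Iic x) := rfl

theorem stdNormalCDF_mono : Monotone stdNormalCDF :=
  fun _ _ h => measureReal_mono (Iic_subset_Iic.2 h)

theorem integrable_stdNormalCDF_comp {α : Type*} [MeasurableSpace α] {μ : Measure α}
    [IsFiniteMeasure μ] {f : α → ℝ} (hf : Measurable f) :
    Integrable (fun u => stdNormalCDF (f u)) μ :=
  .of_bound (stdNormalCDF_mono.measurable.comp hf).aestronglyMeasurable 1
    (ae_of_all _ fun _ => by
      rw [stdNormalCDF_eq_measureReal, Real.norm_of_nonneg measureReal_nonneg]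
      exact measureReal_le_one)

theorem stdNormalCDF_neg (x : ℝ) : stdNormalCDF (-x) = 1 - stdNormalCDF x := by
  have := nullSingletonClass_gaussianReal (μ := 0) one_ne_zero
  have hneg : MeasurePreserving (fun t : ℝ => -t) (gaussianReal 0 1) (gaussianReal 0 1) :=
    ⟨measurable_neg, by rw [gaussianReal_map_neg, neg_zero]⟩
  rw [stdNormalCDF_eq_measureReal,
    ← hneg.measureReal_preimage measurableSet_Iic.nullMeasurableSet,
    show (fun t : ℝ => -t) ⁻¹' Iic (-x) = Ici x by ext; simp,
    ← measureReal_congr Ioi_ae_eq_Ici, ← compl_Iic, probReal_compl_eq_one_sub measurableSet_Iic]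
  rfl

theorem measureReal_gaussianReal_Iic (m : ℝ) {v : ℝ≥0} (hv : v ≠ 0) (y : ℝ) :
    (gaussianReal m v).real (Iic y) = stdNormalCDF ((y - m) / √v) := by
  have hv' : 0 < √(v : ℝ) := Real.sqrt_pos.2 (NNReal.coe_pos.2 (pos_iff_ne_zero.2 hv))
  have hstd :
      MeasurePreserving (fun x => (x - m) / √v) (gaussianReal m v) (gaussianReal 0 1) := by
    refine ⟨by fun_prop, ?_⟩
    rw [show (fun x => (x - m) / √v) = (· / √v) ∘ (· - m) from rfl,
      ← Measure.map_map (by fun_prop) (by fun_prop), gaussianReal_map_sub_const,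
      gaussianReal_map_div_const, sub_self, zero_div]
    congr
    ext
    simp [hv]
  rw [stdNormalCDF_eq_measureReal,
    ← hstd.measureReal_preimage measurableSet_Iic.nullMeasurableSet]
  congr 1
  ext x
  simp [div_le_div_iff_of_pos_right hv']

theorem measureReal_gaussianReal_eq_setIntegral (m : ℝ) {v : ℝ≥0} (hv : v ≠ 0) (s : Set ℝ) :
    (gaussianReal m v).real s = ∫ x in s, gaussianPDFReal m v x := by
  rw [measureReal_def, gaussianReal_apply_eq_integral m hv,
    ENNReal.toReal_ofReal (integral_nonneg (gaussianPDFReal_nonneg m v))]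

theorem setIntegral_gaussianReal_eq_setIntegral_mul (m : ℝ) {v : ℝ≥0} (hv : v ≠ 0) {s : Set ℝ}
    (hs : MeasurableSet s) (g : ℝ → ℝ) :
    ∫ x in s, g x ∂gaussianReal m v = ∫ x in s, gaussianPDFReal m v x * g x := by
  rw [← integral_indicator hs, integral_gaussianReal_eq_integral_smul hv, ← integral_indicator hs]
  simp_rw [smul_eq_mul, indicator_mul_right]

theorem Phi2_integrand_eq_gaussianPDFReal_mul {r : ℝ} (hr : r ^ 2 < 1) (u v : ℝ) :
    1 / (2 * Real.pi * √(1 - r ^ 2)) *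
        Real.exp (-(u ^ 2 - 2 * r * u * v + v ^ 2) / (2 * (1 - r ^ 2)))
      = gaussianPDFReal 0 1 u * gaussianPDFReal (r * u) (1 - r ^ 2).toNNReal v := by
  have h1r : 0 < 1 - r ^ 2 := by linarith
  simp only [gaussianPDFReal, Real.coe_toNNReal _ h1r.le, NNReal.coe_one, mul_one, sub_zero]
  rw [mul_mul_mul_comm, ← Real.exp_add, ← mul_inv, ← Real.sqrt_mul (by positivity),
    show 2 * Real.pi * (2 * Real.pi * (1 - r ^ 2)) = (2 * Real.pi * √(1 - r ^ 2)) ^ 2 by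
      rw [mul_pow, Real.sq_sqrt h1r.le]; ring,
    Real.sqrt_sq (by positivity), one_div]
  congr 2
  field_simp
  ring

theorem Phi2_eq_setIntegral {r : ℝ} (hr : r ^ 2 < 1) (x y : ℝ) :
    Phi2 r x y = ∫ u in Iic x, stdNormalCDF ((y - r * u) / √(1 - r ^ 2)) ∂gaussianReal 0 1 := by
  have hV : (1 - r ^ 2).toNNReal ≠ 0 := by simpa using hr
  rw [setIntegral_gaussianReal_eq_setIntegral_mul 0 one_ne_zero measurableSet_Iic, Phi2]
  simp_rw [Phi2_integrand_eq_gaussianPDFReal_mul hr, integral_const_mul,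
    ← measureReal_gaussianReal_eq_setIntegral _ hV, measureReal_gaussianReal_Iic _ hV,
    Real.coe_toNNReal _ (by linarith : (0:ℝ) ≤ 1 - r ^ 2)]

theorem map_measurableEquivRealProd_symm_gaussianReal_prod :
    ((gaussianReal 0 1).prod (gaussianReal 0 1)).map Complex.measurableEquivRealProd.symm
      = stdGaussian ℂ := by
  rw [stdGaussian_eq_map_pi_orthonormalBasis Complex.orthonormalBasisOneI,
    ← (measurePreserving_finTwoArrow (gaussianReal 0 1)).map_eq,
    Measure.map_map (by fun_prop) (by fun_prop)]
  congr 1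
  funext x
  simp [Complex.ext_iff, Fin.sum_univ_two]

theorem measurePreserving_rotation_gaussianReal_prod {a b : ℝ} (hab : a ^ 2 + b ^ 2 = 1) :
    MeasurePreserving (fun p : ℝ × ℝ => (a * p.1 - b * p.2, b * p.1 + a * p.2))
      ((gaussianReal 0 1).prod (gaussianReal 0 1))
      ((gaussianReal 0 1).prod (gaussianReal 0 1)) := by
  let e := Complex.measurableEquivRealProd
  have he :
      MeasurePreserving e.symm ((gaussianReal 0 1).prod (gaussianReal 0 1)) (stdGaussian ℂ) :=
    ⟨e.symm.measurable, map_measurableEquivRealProd_symm_gaussianReal_prod⟩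
  let c : Circle := ⟨a + b * Complex.I, by
    simp [Submonoid.unitSphere, Complex.norm_eq_sqrt_sq_add_sq, ← sq, hab]⟩
  have hc : MeasurePreserving (rotation c) (stdGaussian ℂ) (stdGaussian ℂ) :=
    ⟨(rotation c).continuous.measurable, stdGaussian_map _⟩
  convert (he.symm e.symm).comp (hc.comp he) using 1
  funext p
  simp only [Function.comp_apply, rotation_apply]
  simp [e, c, add_comm]

theorem MeasureTheory.Measure.measureReal_prod_apply {α β : Type*} [MeasurableSpace α]
    [MeasurableSpace β] {μ : Measure α} {ν : Measure β} [IsFiniteMeasure ν] {s : Set (α × β)}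
    (hs : MeasurableSet s) :
    (μ.prod ν).real s = ∫ x, ν.real (Prod.mk x ⁻¹' s) ∂μ := by
  rw [measureReal_def, Measure.prod_apply hs, ← integral_toReal
    (measurable_measure_prodMk_left hs).aemeasurable (ae_of_all _ fun _ => measure_lt_top _ _)]
  rfl

theorem measureReal_gaussianReal_rotation_slice {a b : ℝ} (ha : 0 < a) (hb : 0 < b)
    (hab : a ^ 2 + b ^ 2 = 1) {x y z : ℝ} (hx : a * z + b * y = x) (u : ℝ) :
    (gaussianReal 0 1).real {t | a * u - b * t < z ∧ b * u + a * t ≤ y}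
      = (Iic x).indicator
          (fun u => stdNormalCDF ((y - b * u) / a) + stdNormalCDF ((z - a * u) / b) - 1) u := by
  have hslice : {t | a * u - b * t < z ∧ b * u + a * t ≤ y}
      = Ioc ((a * u - z) / b) ((y - b * u) / a) := by
    ext t
    simp only [mem_ofPred_eq, mem_Ioc, div_lt_iff₀ hb, le_div_iff₀ ha]
    constructor <;> rintro ⟨h1, h2⟩ <;> constructor <;> linarith
  have hend : (a * u - z) / b ≤ (y - b * u) / a ↔ u ≤ x := by
    have hdiff : (a * u - z) * a - (y - b * u) * b = u - x := by
      rw [← hx]; linear_combination u * hab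
    rw [div_le_div_iff₀ hb ha]
    constructor <;> intro h <;> linarith
  rw [hslice]
  by_cases hu : u ∈ Iic x
  · rw [indicator_of_mem hu, ← Iic_sdiff_Iic,
      measureReal_sdiff (Iic_subset_Iic.2 (hend.2 hu)) measurableSet_Iic,
      show (a * u - z) / b = -((z - a * u) / b) by ring, ← stdNormalCDF_eq_measureReal,
      ← stdNormalCDF_eq_measureReal, stdNormalCDF_neg]
    ring
  · rw [indicator_of_notMem hu, Ioc_eq_empty (fun h => hu (hend.1 h.le)), measureReal_empty]

theorem setIntegral_stdNormalCDF_add_setIntegral_stdNormalCDF {a b : ℝ} (ha : 0 < a) (hb : 0 < b)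
    (hab : a ^ 2 + b ^ 2 = 1) {x y z : ℝ} (hx : a * z + b * y = x) :
    ∫ u in Iic x, stdNormalCDF ((y - b * u) / a) ∂gaussianReal 0 1
        + ∫ u in Iic x, stdNormalCDF ((z - a * u) / b) ∂gaussianReal 0 1
      = stdNormalCDF z * stdNormalCDF y + stdNormalCDF x := by
  have := nullSingletonClass_gaussianReal (μ := 0) one_ne_zero
  have hrect : MeasurableSet (Iio z ×ˢ Iic y) := measurableSet_Iio.prod measurableSet_Iic
  have hrot := measurePreserving_rotation_gaussianReal_prod hab
  have key : stdNormalCDF z * stdNormalCDF y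
      = ∫ u in Iic x, (stdNormalCDF ((y - b * u) / a) + stdNormalCDF ((z - a * u) / b) - 1)
          ∂gaussianReal 0 1 :=
    calc stdNormalCDF z * stdNormalCDF y
        = ((gaussianReal 0 1).prod (gaussianReal 0 1)).real (Iio z ×ˢ Iic y) := by
          rw [measureReal_prod_prod, measureReal_congr Iio_ae_eq_Iic]; rfl
      _ = ∫ u, (gaussianReal 0 1).real {t | a * u - b * t < z ∧ b * u + a * t ≤ y}
            ∂gaussianReal 0 1 := by
          rw [← hrot.measureReal_preimage hrect.nullMeasurableSet,
            Measure.measureReal_prod_apply (hrot.measurable hrect)]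
          rfl
      _ = _ := by
          simp_rw [measureReal_gaussianReal_rotation_slice ha hb hab hx]
          exact integral_indicator measurableSet_Iic
  have hA : Integrable (fun u => stdNormalCDF ((y - b * u) / a))
      ((gaussianReal 0 1).restrict (Iic x)) :=
    integrable_stdNormalCDF_comp (by fun_prop)
  have hB : Integrable (fun u => stdNormalCDF ((z - a * u) / b))
      ((gaussianReal 0 1).restrict (Iic x)) :=
    integrable_stdNormalCDF_comp (by fun_prop)
  rw [key, integral_sub (f := fun u => _ + _) (hA.add hB) (integrable_const 1),
    integral_add hA hB, setIntegral_const, smul_eq_mul, mul_one, stdNormalCDF_eq_measureReal x]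
  ring

/-- Lemma 3 (ii): for `ρ ∈ (0,1)`,
`Φ_{√(1−ρ²)}(x,y) = Φ(y)Φ((x − √(1−ρ²)y)/ρ) + Φ(x) − Φ_ρ(x, (x − √(1−ρ²)y)/ρ)`. -/
theorem Phi2_sqrt_identity (x y ρ : ℝ) (hρ : ρ ∈ Set.Ioo (0 : ℝ) 1) :
    Phi2 (Real.sqrt (1 - ρ ^ 2)) x y
      = stdNormalCDF y * stdNormalCDF ((x - Real.sqrt (1 - ρ ^ 2) * y) / ρ)
        + stdNormalCDF x
        - Phi2 ρ x ((x - Real.sqrt (1 - ρ ^ 2) * y) / ρ) := by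
  obtain ⟨hρ0, hρ1⟩ := hρ
  set s := Real.sqrt (1 - ρ ^ 2) with hs
  set z := (x - s * y) / ρ
  have hs0 : 0 < s := Real.sqrt_pos.2 (by nlinarith)
  have hρs : ρ ^ 2 + s ^ 2 = 1 := by rw [hs, Real.sq_sqrt (by nlinarith)]; ring
  have hsρ : Real.sqrt (1 - s ^ 2) = ρ := by
    rw [← hρs, add_sub_cancel_right, Real.sqrt_sq hρ0.le]
  have hx : ρ * z + s * y = x := by rw [mul_div_cancel₀ _ hρ0.ne']; ring
  have key := setIntegral_stdNormalCDF_add_setIntegral_stdNormalCDF hρ0 hs0 hρs hx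
  rw [Phi2_eq_setIntegral (r := s) (by nlinarith), Phi2_eq_setIntegral (r := ρ) (by nlinarith),
    hsρ, ← hs]
  linarith
end
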